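/- Let p > 3 be prime and λ ∈ F_p^×. Then H_p({1/2, 1/6, 5/6},{1, 1/3, 2/3}; λ) = ∑_{a ∈ C_λ} φ(a), where φ is the quadratic character of F_p and C_λ = {a ∈ F_p \ {0,1} : (λ-1)a³ + 3a² - 3a + 1 = 0}. -/

import Mathlib

/-- The Gauss sum `g(χ) = ∑_{x ∈ F_p^×} χ(x) ζ_p^x` over the prime field `F_p`. -/
noncomputable def gaussSumP (p : ℕ) (ζ : ℂ) (χ : MulChar (ZMod p) ℂ) : ℂ :=
  ∑ᶠ x : ZMod p, χ x * ζ ^ (ZMod.val x)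

/-!
For `A = χ̄³` the Jacobi sum relations give `g(χ⁶) g(χ̄³) / g(χ³) = ∑ₓ A(x² - x) - ∑ₓ A(x)`
uniformly in `χ`. Summed against `χ(t)` with `t = -λ/64`, orthogonality of characters turns this
into `(p - 1) (#{x | (x² - x)³ = t} - #{u | u³ = t})`. Fibring over `s = x² - x`, the fibre over `s`
has `1 + φ(1 + 4s)` points, so the difference is `∑_{s³ = t} φ(1 + 4s)`, and `a = 1 / (1 + 4s)`
carries this sum onto `C_λ`.
-/

open Finset

lemma mulChar_neg_one_mul_self {M R : Type*} [CommRing M] [CommRing R] (χ : MulChar M R) :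
    χ (-1) * χ (-1) = 1 := by
  rw [← map_mul, neg_mul_neg, one_mul, map_one]

section GaussJacobi

variable {F R : Type*} [Field F] [Fintype F]

lemma gaussSum_mul_gaussSum_inv [CommRing R] [IsDomain R] {χ : MulChar F R} (hχ : χ ≠ 1)
    {ψ : AddChar F R} (hψ : ψ.IsPrimitive) :
    gaussSum χ ψ * gaussSum χ⁻¹ ψ = χ (-1) * Fintype.card F := by
  rw [← mul_gaussSum_inv_eq_gaussSum χ⁻¹, MulChar.inv_apply', inv_neg_one, mul_left_comm,
    gaussSum_mul_gaussSum_eq_card hχ hψ]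

lemma mulChar_neg_one_mul_jacobiSum_self [CommRing R] (χ : MulChar F R) :
    χ (-1) * jacobiSum χ χ = ∑ x, χ (x ^ 2 - x) := by
  rw [jacobiSum, mul_sum]
  refine sum_congr rfl fun x _ ↦ ?_
  rw [← mul_assoc, ← map_mul, ← map_mul]
  ring_nf

theorem gaussSum_mul_gaussSum_div_gaussSum_inv [Field R] (hq : (Fintype.card F : R) ≠ 0)
    {ψ : AddChar F R} (hψ : ψ.IsPrimitive) (A : MulChar F R) :
    gaussSum (A * A)⁻¹ ψ * gaussSum A ψ / gaussSum A⁻¹ ψ = ∑ x, A (x ^ 2 - x) - ∑ x, A x := by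
  classical
  have hψ1 : ψ ≠ 1 := by simpa using hψ one_ne_zero
  rw [← mulChar_neg_one_mul_jacobiSum_self]
  by_cases hA : A = 1
  · have hcard : 0 < Fintype.card F := Fintype.card_pos
    simp only [hA, mul_one, inv_one, gaussSum_one_left hψ1, jacobiSum_one_one,
      MulChar.sum_one_eq_card_units, Fintype.card_units, Nat.cast_pred hcard]
    rw [MulChar.one_apply isUnit_one.neg]
    ring
  by_cases hAA : A * A = 1
  · have hinv : A⁻¹ = A := inv_eq_of_mul_eq_one_right hAA
    have hJ : jacobiSum A A = -A (-1) := by simpa [hinv] using jacobiSum_nontrivial_inv hA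
    have ha := gaussSum_ne_zero_of_nontrivial hq hA hψ
    rw [hAA, inv_one, hinv, gaussSum_one_left hψ1, hJ, MulChar.sum_eq_zero_of_ne_one hA,
      neg_one_mul, neg_div, div_self ha]
    linear_combination mulChar_neg_one_mul_self A
  · have hJ := jacobiSum_mul_nontrivial hAA ψ
    have h1 := gaussSum_mul_gaussSum_inv hA hψ
    have h2 := gaussSum_mul_gaussSum_inv hAA hψ
    rw [MulChar.mul_apply, mulChar_neg_one_mul_self, one_mul] at h2
    have hs := mulChar_neg_one_mul_self A
    have ha := gaussSum_ne_zero_of_nontrivial hq hA hψ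
    have hb := gaussSum_ne_zero_of_nontrivial hq (inv_ne_one.mpr hA) hψ
    have hc := gaussSum_ne_zero_of_nontrivial hq hAA hψ
    rw [MulChar.sum_eq_zero_of_ne_one hA, sub_zero, div_eq_iff hb]
    refine mul_left_cancel₀ (mul_ne_zero hc ha) ?_
    linear_combination gaussSum A ψ ^ 2 * h2 - A (-1) * jacobiSum A A * gaussSum (A * A) ψ * h1 -
      A (-1) ^ 2 * Fintype.card F * hJ - Fintype.card F * gaussSum A ψ ^ 2 * hs

end GaussJacobi

section Orthogonality

variable {n : ℕ} [NeZero n] {R : Type*} [CommRing R] [IsDomain R]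
  [HasEnoughRootsOfUnity R (Monoid.exponent (ZMod n)ˣ)]

lemma sum_inv_pow_apply_mul_apply {k : ℕ} (hk : k ≠ 0) {t : ZMod n} (ht : IsUnit t)
    (u : ZMod n) :
    ∑ χ : DirichletCharacter R n, (χ ^ k)⁻¹ u * χ t = if u ^ k = t then (n.totient : R) else 0 := by
  by_cases hu : IsUnit u
  · obtain ⟨v, rfl⟩ := hu
    have hχ : ∀ χ : DirichletCharacter R n, (χ ^ k)⁻¹ v = χ (v ^ k : ZMod n)⁻¹ := fun χ ↦ by
      rw [MulChar.inv_apply, Ring.inverse_unit, MulChar.pow_apply' χ hk, ← map_pow,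
        ← Units.val_pow_eq_pow_val, ← Units.val_pow_eq_pow_val, ZMod.inv_coe_unit, inv_pow]
    simp only [hχ]
    exact DirichletCharacter.sum_char_inv_mul_char_eq R ((Units.isUnit v).pow k) t
  · have hne : u ^ k ≠ t := fun h ↦ hu (isUnit_pow_iff hk |>.mp (h ▸ ht))
    simp [MulChar.map_nonunit _ hu, hne]

lemma sum_sum_inv_pow_apply_mul_apply {k : ℕ} (hk : k ≠ 0) {t : ZMod n} (ht : IsUnit t)
    (f : ZMod n → ZMod n) :
    ∑ χ : DirichletCharacter R n, (∑ x, (χ ^ k)⁻¹ (f x)) * χ t =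
      n.totient * #{x | f x ^ k = t} := by
  simp only [sum_mul]
  rw [sum_comm]
  simp only [sum_inv_pow_apply_mul_apply hk ht, sum_ite, sum_const_zero, add_zero, sum_const,
    nsmul_eq_mul]
  ring

end Orthogonality

section Counting

variable {F : Type*} [Field F] [Fintype F] [DecidableEq F]

lemma card_filter_sq_sub_self_eq (hF : ringChar F ≠ 2) (s : F) :
    (#{x | x ^ 2 - x = s} : ℤ) = quadraticChar F (1 + 4 * s) + 1 := by
  have h2 : (2 : F) ≠ 0 := Ring.two_ne_zero hF
  rw [← quadraticChar_card_sqrts hF, Set.toFinset_ofPred]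
  congr 1
  refine card_nbij' (fun x ↦ 2 * x - 1) (fun y ↦ (y + 1) / 2) ?_ ?_ ?_ ?_
  · intro x hx
    simp only [coe_filter, mem_univ, true_and, Set.mem_ofPred_eq] at hx ⊢
    linear_combination 4 * hx
  · intro y hy
    simp only [coe_filter, mem_univ, true_and, Set.mem_ofPred_eq] at hy ⊢
    field_simp
    linear_combination hy
  · intro x _
    simp only
    field_simp
    ring
  · intro y _
    simp only
    field_simp
    ring

lemma card_filter_sq_sub_self_pow_sub_card_filter_pow (hF : ringChar F ≠ 2) (k : ℕ) (t : F) :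
    (#{x | (x ^ 2 - x) ^ k = t} : ℤ) - #{u | u ^ k = t} =
      ∑ s with s ^ k = t, quadraticChar F (1 + 4 * s) := by
  rw [card_eq_sum_card_fiberwise (f := fun x ↦ x ^ 2 - x) (t := {u | u ^ k = t})
    (fun x hx ↦ by simpa using hx), card_eq_sum_ones {u | u ^ k = t}]
  push_cast
  rw [← sum_sub_distrib]
  refine sum_congr rfl fun s hs ↦ ?_
  have hfiber : {x ∈ ({x | (x ^ 2 - x) ^ k = t} : Finset F) | x ^ 2 - x = s} =
      ({x | x ^ 2 - x = s} : Finset F) := by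
    ext x
    simp only [mem_filter, mem_univ, true_and, and_iff_right_iff_imp] at hs ⊢
    rintro rfl
    exact hs
  rw [hfiber, card_filter_sq_sub_self_eq hF s]
  ring

/-- The substitution `a = 1 / (1 + 4 s)` gives `64 s³ a³ = (1 - a)³`, turning `s³ = -λ/64` into
the cubic defining `C_λ`. -/
lemma sum_quadraticChar_one_add_four_mul (hF : ringChar F ≠ 2) {lam : F} (hlam : lam ≠ 0) :
    ∑ s with s ^ 3 = -lam / 64, quadraticChar F (1 + 4 * s) =
      ∑ a with a ≠ 0 ∧ a ≠ 1 ∧ (lam - 1) * a ^ 3 + 3 * a ^ 2 - 3 * a + 1 = 0,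
        quadraticChar F a := by
  have h2 : (2 : F) ≠ 0 := Ring.two_ne_zero hF
  have h4 : (4 : F) ≠ 0 := by
    rw [show (4 : F) = 2 ^ 2 by norm_num]
    exact pow_ne_zero 2 h2
  have h64 : (64 : F) ≠ 0 := by
    rw [show (64 : F) = 2 ^ 6 by norm_num]
    exact pow_ne_zero 6 h2
  refine sum_bij_ne_zero (fun s _ _ ↦ (1 + 4 * s)⁻¹) ?_ ?_ ?_ ?_
  · intro s hs hφ
    rw [mem_filter] at hs
    rw [ne_eq, quadraticChar_eq_zero_iff] at hφ
    have hs64 : 64 * s ^ 3 = -lam := by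
      rw [hs.2]
      field_simp
    have hs0 : s ≠ 0 := by
      rintro rfl
      exact hlam (by linear_combination hs64)
    simp only [mem_filter, mem_univ, true_and, ne_eq, inv_eq_zero, inv_eq_one, hφ,
      not_false_eq_true]
    refine ⟨fun h ↦ hs0 ?_, ?_⟩
    · simpa [h4] using h
    · field_simp
      linear_combination hs64
  · intro s _ _ s' _ _ h
    simpa [h4] using h
  · intro a ha _
    rw [mem_filter] at ha
    obtain ⟨-, ha0, -, hcubic⟩ := ha
    have hs : 1 + 4 * ((a⁻¹ - 1) / 4) = a⁻¹ := by
      field_simp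
      ring
    refine ⟨(a⁻¹ - 1) / 4, ?_, ?_, ?_⟩
    · simp only [mem_filter, mem_univ, true_and]
      field_simp
      linear_combination 64 * hcubic
    · rw [hs, ne_eq, quadraticChar_eq_zero_iff]
      exact inv_ne_zero ha0
    · rw [hs, inv_inv]
  · intro s _ _
    rw [← MulChar.inv_apply', (quadraticChar_isQuadratic F).inv]

end Counting

lemma gaussSumP_eq_gaussSum {p : ℕ} [NeZero p] {ζ : ℂ} (hζ : ζ ^ p = 1)
    (χ : MulChar (ZMod p) ℂ) : gaussSumP p ζ χ = gaussSum χ (AddChar.zmodChar p hζ) := by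
  simp only [gaussSumP, gaussSum, finsum_eq_sum_of_fintype, AddChar.zmodChar_apply]

theorem sum_gaussSum_mul_gaussSum_div_gaussSum_mul_apply {p : ℕ} [Fact p.Prime]
    {ψ : AddChar (ZMod p) ℂ} (hψ : ψ.IsPrimitive) {t : ZMod p} (ht : t ≠ 0) :
    ∑ χ : MulChar (ZMod p) ℂ,
        gaussSum (χ ^ 6) ψ * gaussSum (χ ^ 3)⁻¹ ψ / gaussSum (χ ^ 3) ψ * χ t =
      (p - 1) * ((#{x | (x ^ 2 - x) ^ 3 = t} : ℂ) - #{u | u ^ 3 = t}) := by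
  have hcard : (Fintype.card (ZMod p) : ℂ) ≠ 0 := by
    rw [ZMod.card]
    exact_mod_cast (Fact.out : p.Prime).ne_zero
  have hsummand : ∀ χ : MulChar (ZMod p) ℂ,
      gaussSum (χ ^ 6) ψ * gaussSum (χ ^ 3)⁻¹ ψ / gaussSum (χ ^ 3) ψ =
        ∑ x, (χ ^ 3)⁻¹ (x ^ 2 - x) - ∑ x, (χ ^ 3)⁻¹ x := fun χ ↦ by
    rw [← gaussSum_mul_gaussSum_div_gaussSum_inv hcard hψ, inv_inv, ← mul_inv, inv_inv,
      ← pow_add]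
  simp only [hsummand, sub_mul, sum_sub_distrib]
  rw [sum_sum_inv_pow_apply_mul_apply three_ne_zero ht.isUnit (fun x ↦ x ^ 2 - x),
    sum_sum_inv_pow_apply_mul_apply three_ne_zero ht.isUnit (fun x ↦ x),
    Nat.totient_prime Fact.out, Nat.cast_pred (Fact.out : p.Prime).pos]
  ring

/-- For `p > 3` prime and `λ ∈ F_p^×`, the finite field hypergeometric function
`H_p({1/2,1/6,5/6},{1,1/3,2/3}; λ)`, given (after Hasse–Davenport reduction) by
`(1/(p-1)) ∑_χ g(χ⁶)g(χ̄³)/g(χ³) · χ(-λ/64)`, equals `∑_{a ∈ C_λ} φ(a)`, where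
`C_λ = {a ∈ F_p \ {0,1} : (λ-1)a³ + 3a² - 3a + 1 = 0}` and `φ` is the quadratic
character of `F_p`. -/
theorem hypergeometric_2_6_4_algebraic (p : ℕ) [Fact p.Prime] (hp : 3 < p)
    (ζ : ℂ) (hζ : IsPrimitiveRoot ζ p) (lam : ZMod p) (hlam : lam ≠ 0) :
    (1 / ((p : ℂ) - 1)) * ∑ᶠ χ : MulChar (ZMod p) ℂ,
        gaussSumP p ζ (χ ^ 6) * gaussSumP p ζ ((χ ^ 3)⁻¹) / gaussSumP p ζ (χ ^ 3) *
          χ (-lam / (64 : ZMod p)) =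
      ∑ a ∈ Finset.univ.filter
          (fun a : ZMod p => a ≠ 0 ∧ a ≠ 1 ∧ (lam - 1) * a ^ 3 + 3 * a ^ 2 - 3 * a + 1 = 0),
        ((quadraticChar (ZMod p)).ringHomComp (Int.castRingHom ℂ)) a := by
  have hF : ringChar (ZMod p) ≠ 2 := by
    rw [ZMod.ringChar_zmod_n]
    omega
  have ht : -lam / 64 ≠ 0 := by
    refine div_ne_zero (neg_ne_zero.mpr hlam) ?_
    rw [show (64 : ZMod p) = 2 ^ 6 by norm_num]
    exact pow_ne_zero 6 (Ring.two_ne_zero hF)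
  have hp1 : (p : ℂ) - 1 ≠ 0 := sub_ne_zero.mpr (by exact_mod_cast (Fact.out : p.Prime).ne_one)
  have hcount := congrArg (Int.cast : ℤ → ℂ)
    ((card_filter_sq_sub_self_pow_sub_card_filter_pow hF 3 (-lam / 64)).trans
      (sum_quadraticChar_one_add_four_mul hF hlam))
  push_cast at hcount
  simp only [gaussSumP_eq_gaussSum hζ.pow_eq_one, finsum_eq_sum_of_fintype,
    sum_gaussSum_mul_gaussSum_div_gaussSum_mul_apply
      (AddChar.zmodChar_primitive_of_primitive_root p hζ) ht, hcount,
    MulChar.ringHomComp_apply, eq_intCast]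
  field_simp
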